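/- arXiv:1210.2085 — 4 statements merged into one kernel-verified Lean document; each statement's English description precedes it below -/
import Mathlib

section
/- Let 0 ≤ δ ≤ 1/3 and n ∈ ℕ. Let Q₁ be the distribution on {−1,1} assigning probability (1+δ)/2 to 1 and (1−δ)/2 to −1, and let Q₋₁ be the distribution assigning probability (1−δ)/2 to 1 and (1+δ)/2 to −1. Then the total variation distance between the n-fold product measures Q₁ⁿ and Q₋₁ⁿ is at most δ·√(3n/2). -/
/-!
Instead of Pinsker's inequality we bound total variation through the Bhattacharyya coefficient
`BC(p, q) = ∑ √(p q)`. Since `√(p q) = √(min p q · max p q)`, Cauchy–Schwarz gives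
`BC² ≤ (∑ min p q) (∑ max p q) = (1 - T) (1 + T)`, where `T` is the total variation distance,
so `T ≤ √(1 - BC²)`. The coefficient is multiplicative over product measures, and for the two
biased coins `BC² = 1 - δ²`; Bernoulli's inequality `(1 - δ²)ⁿ ≥ 1 - n δ²` then gives `T ≤ δ √n`.
-/

open MeasureTheory

/-- The Bernoulli-type measure on `Bool` assigning probability `p` to `true`
and `1 - p` to `false`. -/
noncomputable def bernMeasure (p : ℝ) : Measure Bool :=
  ENNReal.ofReal p • Measure.dirac true + ENNReal.ofReal (1 - p) • Measure.dirac false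

open Finset

noncomputable def bhattacharyyaCoeff {α : Type*} [Fintype α] (p q : α → ℝ) : ℝ :=
  ∑ x, √(p x * q x)

section Discrete

variable {α : Type*} [Fintype α] (p q : α → ℝ)

lemma sum_sub_sum_le_half_sum_abs_sub (hpq : ∑ x, p x = ∑ x, q x) (s : Finset α) :
    ∑ x ∈ s, p x - ∑ x ∈ s, q x ≤ (∑ x, |p x - q x|) / 2 := by
  have max_zero_eq (a : ℝ) : max a 0 = (a + |a|) / 2 := by
    rcases le_total a 0 with h | h <;> simp [h, abs_of_nonpos, abs_of_nonneg]
  calc ∑ x ∈ s, p x - ∑ x ∈ s, q x = ∑ x ∈ s, (p x - q x) := (sum_sub_distrib ..).symm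
    _ ≤ ∑ x ∈ s, max (p x - q x) 0 := sum_le_sum fun x _ => le_max_left _ _
    _ ≤ ∑ x, max (p x - q x) 0 :=
      sum_le_sum_of_subset_of_nonneg (subset_univ s) fun _ _ _ => le_max_right _ _
    _ = (∑ x, |p x - q x|) / 2 := by
      simp only [max_zero_eq, ← sum_div, sum_add_distrib, sum_sub_distrib, hpq, sub_self,
        zero_add]

lemma abs_sum_sub_sum_le_half_sum_abs_sub (hpq : ∑ x, p x = ∑ x, q x) (s : Finset α) :
    |∑ x ∈ s, p x - ∑ x ∈ s, q x| ≤ (∑ x, |p x - q x|) / 2 := by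
  refine abs_sub_le_iff.2 ⟨sum_sub_sum_le_half_sum_abs_sub p q hpq s, ?_⟩
  simpa only [abs_sub_comm] using sum_sub_sum_le_half_sum_abs_sub q p hpq.symm s

lemma sq_bhattacharyyaCoeff_add_sq_half_sum_abs_sub_le (hp : 0 ≤ p) (hq : 0 ≤ q)
    (hp1 : ∑ x, p x = 1) (hq1 : ∑ x, q x = 1) :
    bhattacharyyaCoeff p q ^ 2 + ((∑ x, |p x - q x|) / 2) ^ 2 ≤ 1 := by
  have cauchy_schwarz : bhattacharyyaCoeff p q ^ 2 ≤
      (∑ x, min (p x) (q x)) * ∑ x, max (p x) (q x) := by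
    refine sum_sq_le_sum_mul_sum_of_sq_le_mul _ (fun x _ => le_min (hp x) (hq x))
      (fun x _ => le_max_of_le_left (hp x)) fun x _ => ?_
    rw [Real.sq_sqrt (mul_nonneg (hp x) (hq x)), min_mul_max]
  have hsum : ∑ x, min (p x) (q x) + ∑ x, max (p x) (q x) = 2 := by
    rw [← sum_add_distrib]
    simp only [min_add_max, sum_add_distrib, hp1, hq1]
    norm_num
  have hdiff : ∑ x, max (p x) (q x) - ∑ x, min (p x) (q x) = ∑ x, |p x - q x| := by
    rw [← sum_sub_distrib]
    simp only [max_sub_min_eq_abs']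
  rw [← hdiff]
  linear_combination cauchy_schwarz +
    (∑ x, min (p x) (q x) + ∑ x, max (p x) (q x) + 2) / 4 * hsum

theorem abs_sum_sub_sum_le_sqrt_one_sub_sq_bhattacharyyaCoeff (hp : 0 ≤ p) (hq : 0 ≤ q)
    (hp1 : ∑ x, p x = 1) (hq1 : ∑ x, q x = 1) (s : Finset α) :
    |∑ x ∈ s, p x - ∑ x ∈ s, q x| ≤ √(1 - bhattacharyyaCoeff p q ^ 2) :=
  (abs_sum_sub_sum_le_half_sum_abs_sub p q (hp1.trans hq1.symm) s).trans <|
    Real.le_sqrt_of_sq_le <| by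
      linarith [sq_bhattacharyyaCoeff_add_sq_half_sum_abs_sub_le p q hp hq hp1 hq1]

end Discrete

lemma bhattacharyyaCoeff_pi {ι : Type*} [Fintype ι] [DecidableEq ι] {α : ι → Type*}
    [∀ i, Fintype (α i)] (p q : ∀ i, α i → ℝ) (hp : ∀ i, 0 ≤ p i) (hq : ∀ i, 0 ≤ q i) :
    bhattacharyyaCoeff (fun x : ∀ i, α i => ∏ i, p i (x i)) (fun x => ∏ i, q i (x i)) =
      ∏ i, bhattacharyyaCoeff (p i) (q i) := by
  simp only [bhattacharyyaCoeff, Fintype.prod_sum, ← prod_mul_distrib]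
  refine sum_congr rfl fun x _ => ?_
  exact Real.sqrt_prod _ fun i _ => mul_nonneg (hp i _) (hq i _)

section ProductMeasure

variable {ι : Type*} [Fintype ι] {α : ι → Type*} [∀ i, MeasurableSpace (α i)]

lemma measureReal_pi_singleton (μ : ∀ i, Measure (α i)) [∀ i, IsFiniteMeasure (μ i)]
    (x : ∀ i, α i) : (Measure.pi μ).real {x} = ∏ i, (μ i).real {x i} := by
  simp only [measureReal_def, Measure.pi_singleton, ENNReal.toReal_prod]

variable [∀ i, Fintype (α i)] [∀ i, MeasurableSingletonClass (α i)]

theorem abs_measureReal_pi_sub_le (μ ν : ∀ i, Measure (α i)) [∀ i, IsProbabilityMeasure (μ i)]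
    [∀ i, IsProbabilityMeasure (ν i)] (A : Set (∀ i, α i)) :
    |(Measure.pi μ).real A - (Measure.pi ν).real A| ≤
      √(1 - ∏ i, bhattacharyyaCoeff (fun a => (μ i).real {a}) (fun a => (ν i).real {a}) ^ 2) := by
  classical
  have sum_singleton (ρ : Measure (∀ i, α i)) [IsProbabilityMeasure ρ] :
      ∑ x, ρ.real {x} = 1 := by
    rw [sum_measureReal_singleton, coe_univ, probReal_univ]
  have key := abs_sum_sub_sum_le_sqrt_one_sub_sq_bhattacharyyaCoeff
    (fun x => (Measure.pi μ).real {x}) (fun x => (Measure.pi ν).real {x})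
    (fun x => measureReal_nonneg) (fun x => measureReal_nonneg)
    (sum_singleton _) (sum_singleton _) A.toFinset
  rw [sum_measureReal_singleton, sum_measureReal_singleton, Set.coe_toFinset] at key
  simp only [measureReal_pi_singleton] at key
  rwa [bhattacharyyaCoeff_pi _ _ (fun i a => measureReal_nonneg) (fun i a => measureReal_nonneg),
    ← prod_pow] at key

end ProductMeasure

section Bernoulli

variable {p : ℝ}

lemma bernMeasure_real_singleton (hp0 : 0 ≤ p) (hp1 : p ≤ 1) (b : Bool) :
    (bernMeasure p).real {b} = if b then p else 1 - p := by
  cases b <;> simp [bernMeasure, measureReal_def, hp0, hp1]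

lemma isProbabilityMeasure_bernMeasure (hp0 : 0 ≤ p) (hp1 : p ≤ 1) :
    IsProbabilityMeasure (bernMeasure p) := by
  constructor
  simp [bernMeasure, ← ENNReal.ofReal_add hp0 (sub_nonneg.2 hp1)]

end Bernoulli

lemma sq_bhattacharyyaCoeff_bernMeasure {δ : ℝ} (hδ₀ : -1 ≤ δ) (hδ₁ : δ ≤ 1) :
    bhattacharyyaCoeff (fun b => (bernMeasure ((1 + δ) / 2)).real {b})
      (fun b => (bernMeasure ((1 - δ) / 2)).real {b}) ^ 2 = 1 - δ ^ 2 := by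
  simp only [bhattacharyyaCoeff, Fintype.sum_bool, bernMeasure_real_singleton (p := (1 + δ) / 2)
    (by linarith) (by linarith), bernMeasure_real_singleton (p := (1 - δ) / 2) (by linarith)
    (by linarith), if_true, Bool.false_eq_true, if_false]
  have coin_product : (1 + δ) / 2 * ((1 - δ) / 2) = (1 - δ ^ 2) / 4 := by ring
  have coin_product' : (1 - (1 + δ) / 2) * (1 - (1 - δ) / 2) = (1 - δ ^ 2) / 4 := by ring
  rw [coin_product, coin_product', ← two_mul, mul_pow, Real.sq_sqrt (by nlinarith)]
  ring

theorem stmt3_general (δ : ℝ) (h0 : 0 ≤ δ) (h1 : δ ≤ 1/3) (n : ℕ)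
    (A : Set (Fin n → Bool)) :
    |(Measure.pi (fun _ : Fin n => bernMeasure ((1 + δ) / 2)) A).toReal -
      (Measure.pi (fun _ : Fin n => bernMeasure ((1 - δ) / 2)) A).toReal|
      ≤ δ * Real.sqrt (3 * n / 2) := by
  have hδ : δ ≤ 1 := by linarith
  have := isProbabilityMeasure_bernMeasure (p := (1 + δ) / 2) (by linarith) (by linarith)
  have := isProbabilityMeasure_bernMeasure (p := (1 - δ) / 2) (by linarith) (by linarith)
  have bernoulli : 1 - (n : ℝ) * δ ^ 2 ≤ (1 - δ ^ 2) ^ n := by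
    simpa [sub_eq_add_neg] using one_add_mul_le_pow (a := -δ ^ 2) (by nlinarith) n
  have tv_le := abs_measureReal_pi_sub_le (fun _ : Fin n => bernMeasure ((1 + δ) / 2))
    (fun _ => bernMeasure ((1 - δ) / 2)) A
  rw [sq_bhattacharyyaCoeff_bernMeasure (by linarith) hδ, prod_const, card_univ,
    Fintype.card_fin] at tv_le
  calc _ ≤ √(1 - (1 - δ ^ 2) ^ n) := tv_le
    _ ≤ √(δ ^ 2 * n) := Real.sqrt_le_sqrt (by linarith)
    _ = δ * √n := by rw [Real.sqrt_mul (sq_nonneg δ), Real.sqrt_sq h0]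
    _ ≤ δ * √(3 * n / 2) := by gcongr; linarith

theorem stmt3 (δ : ℝ) (h0 : 0 ≤ δ) (h1 : δ ≤ 1/3) (n : ℕ)
    (A : Set (Fin n → Bool)) (hA : MeasurableSet A) :
    |(Measure.pi (fun _ : Fin n => bernMeasure ((1 + δ) / 2)) A).toReal -
      (Measure.pi (fun _ : Fin n => bernMeasure ((1 - δ) / 2)) A).toReal|
      ≤ δ * Real.sqrt (3 * n / 2) :=
  stmt3_general δ h0 h1 n A
end

section
/- Let d ≥ 1 be odd and let x ∈ {−1,1}^d. Then the sum of z over all z ∈ {−1,1}^d with ⟨z, x⟩ > 0 equals binom(d−1, (d−1)/2) · x, where ⟨·,·⟩ is the standard inner product on ℝ^d. -/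
/-- The vertex of the hypercube `{-1,1}^d` associated to a Boolean vector. -/
def signVec (d : ℕ) (b : Fin d → Bool) : Fin d → ℝ := fun j => if b j then 1 else -1

noncomputable def T (d : ℕ) (c : Fin d → Bool) : ℕ := (Finset.univ.filter (fun i => c i = true)).card

lemma sig_eq (d : ℕ) (c : Fin d → Bool) :
    ∑ j, signVec d c j = 2 * (T d c : ℝ) - d := by
  have : ∀ j, signVec d c j = 2 * (if c j = true then (1:ℝ) else 0) - 1 := by
    intro j; simp [signVec]; split <;> norm_num
  rw [Finset.sum_congr rfl (fun j _ => this j)]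
  rw [Finset.sum_sub_distrib, ← Finset.mul_sum, Finset.sum_boole, Finset.sum_const]
  simp [T]

lemma sig_pos_iff (d : ℕ) (c : Fin d → Bool) :
    (0 < ∑ j, signVec d c j) ↔ (d < 2 * T d c) := by
  rw [sig_eq]
  constructor <;> intro h
  · have : (d:ℝ) < 2 * T d c := by linarith
    exact_mod_cast this
  · have : (d:ℝ) < 2 * T d c := by exact_mod_cast h
    linarith

lemma card_flip (d : ℕ) (j : Fin d) (n : ℕ) :
    (Finset.univ.filter (fun c : Fin d → Bool => c j = false ∧ n < 2 * T d c)).card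
  = (Finset.univ.filter (fun c : Fin d → Bool => c j = true ∧ n + 2 < 2 * T d c)).card := by
  apply Finset.card_nbij' (i := fun c => Function.update c j true)
    (j := fun c => Function.update c j false)
  · intro c hc
    simp only [Finset.mem_coe, Finset.mem_filter, Finset.mem_univ, true_and] at hc ⊢
    constructor
    · simp [Function.update]
    · have : T d (Function.update c j true) = T d c + 1 := by
        unfold T
        rw [show (Finset.univ.filter (fun i => Function.update c j true i = true))
            = insert j (Finset.univ.filter (fun i => c i = true)) from ?_]
        · rw [Finset.card_insert_of_notMem (by simp [hc.1])]
        · ext i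
          by_cases h : i = j <;> simp [Function.update, h, hc.1]
      omega
  · intro c hc
    simp only [Finset.mem_coe, Finset.mem_filter, Finset.mem_univ, true_and] at hc ⊢
    constructor
    · simp [Function.update]
    · have : T d c = T d (Function.update c j false) + 1 := by
        unfold T
        rw [show (Finset.univ.filter (fun i => c i = true))
            = insert j (Finset.univ.filter (fun i => Function.update c j false i = true)) from ?_]
        · rw [Finset.card_insert_of_notMem (by simp [Function.update])]
        · ext i
          by_cases h : i = j <;> simp [Function.update, h, hc.1]
      omega
  · intro c hc
    simp only [Finset.mem_coe, Finset.mem_filter, Finset.mem_univ, true_and] at hc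
    funext i
    by_cases h : i = j
    · subst h; simp [Function.update, hc.1]
    · simp [Function.update, h]
  · intro c hc
    simp only [Finset.mem_coe, Finset.mem_filter, Finset.mem_univ, true_and] at hc
    funext i
    by_cases h : i = j
    · subst h; simp [Function.update, hc.1]
    · simp [Function.update, h]

lemma card_exact (d : ℕ) (j : Fin d) (m : ℕ) (hd : d = 2 * m + 1) :
    (Finset.univ.filter (fun c : Fin d → Bool => c j = true ∧ T d c = m + 1)).card
  = (2 * m).choose m := by
  have key : (Finset.univ.filter (fun c : Fin d → Bool => c j = true ∧ T d c = m + 1)).card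
      = ((Finset.univ.erase j).powersetCard m).card := by
    apply Finset.card_nbij' (i := fun c => (Finset.univ.filter (fun i => c i = true)).erase j)
      (j := fun s i => decide (i = j ∨ i ∈ s))
    · intro c hc
      simp only [Finset.mem_coe, Finset.mem_filter, Finset.mem_univ, true_and] at hc
      simp only [Finset.mem_coe, Finset.mem_powersetCard]
      constructor
      · intro i hi
        simp only [Finset.mem_erase, Finset.mem_filter] at hi ⊢
        exact ⟨hi.1, Finset.mem_univ i⟩
      · rw [Finset.card_erase_of_mem (by simp [hc.1])]
        unfold T at hc; omega
    · intro s hs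
      simp only [Finset.mem_coe, Finset.mem_powersetCard] at hs
      have hjs : j ∉ s := fun h => by simpa using (hs.1 h)
      simp only [Finset.mem_coe, Finset.mem_filter, Finset.mem_univ, true_and]
      constructor
      · simp
      · unfold T
        rw [show (Finset.univ.filter (fun i => decide (i = j ∨ i ∈ s) = true))
            = insert j s from ?_]
        · rw [Finset.card_insert_of_notMem hjs, hs.2]
        · ext i; simp [Finset.mem_insert]
    · intro c hc
      simp only [Finset.mem_coe, Finset.mem_filter, Finset.mem_univ, true_and] at hc
      funext i
      by_cases h : i = j
      · subst h; simp [hc.1]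
      · simp only [decide_eq_true_eq, Finset.mem_erase, Finset.mem_filter]
        by_cases h2 : c i = true <;> simp [h, h2]
    · intro s hs
      simp only [Finset.mem_coe, Finset.mem_powersetCard] at hs
      have hjs : j ∉ s := fun h => by simpa using (hs.1 h)
      ext i
      simp only [Finset.mem_erase, Finset.mem_filter, Finset.mem_univ, true_and,
        decide_eq_true_eq]
      constructor
      · rintro ⟨h1, h2 | h3⟩
        · exact absurd h2 h1
        · exact h3
      · intro hi
        exact ⟨fun h => hjs (h ▸ hi), Or.inr hi⟩
  rw [key, Finset.card_powersetCard, Finset.card_erase_of_mem (Finset.mem_univ j)]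
  simp [hd]

lemma component (d : ℕ) (m : ℕ) (hd : d = 2 * m + 1) (j : Fin d) :
    ∑ c ∈ Finset.univ.filter (fun c : Fin d → Bool => 0 < ∑ i, signVec d c i),
      signVec d c j = ((2 * m).choose m : ℝ) := by
  have hfc : Finset.univ.filter (fun c : Fin d → Bool => 0 < ∑ i, signVec d c i)
      = Finset.univ.filter (fun c : Fin d → Bool => d < 2 * T d c) := by
    apply Finset.filter_congr; intro c _; simp [sig_pos_iff]
  rw [hfc]
  have : ∀ c : Fin d → Bool, signVec d c j = if c j = true then (1:ℝ) else -1 := by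
    intro c; simp [signVec]
  rw [Finset.sum_congr rfl (fun c _ => this c), Finset.sum_ite, Finset.sum_const,
    Finset.sum_const, Finset.filter_filter, Finset.filter_filter]
  have e1 : (Finset.univ.filter (fun c : Fin d → Bool => d < 2 * T d c ∧ c j = true))
      = Finset.univ.filter (fun c : Fin d → Bool => c j = true ∧ d < 2 * T d c) := by
    apply Finset.filter_congr; intro c _; simp [and_comm]
  have e2 : (Finset.univ.filter (fun c : Fin d → Bool => d < 2 * T d c ∧ ¬c j = true))
      = Finset.univ.filter (fun c : Fin d → Bool => c j = false ∧ d < 2 * T d c) := by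
    apply Finset.filter_congr; intro c _; simp [and_comm]
  rw [e1, e2, card_flip]
  have e3 : (Finset.univ.filter (fun c : Fin d → Bool => c j = true ∧ d < 2 * T d c))
      = Finset.univ.filter (fun c : Fin d → Bool => c j = true ∧ d + 2 < 2 * T d c)
      ∪ Finset.univ.filter (fun c : Fin d → Bool => c j = true ∧ T d c = m + 1) := by
    ext c
    simp only [Finset.mem_union, Finset.mem_filter, Finset.mem_univ, true_and]
    constructor
    · rintro ⟨h1, h2⟩
      subst hd
      rcases Nat.lt_or_ge (2 * m + 1 + 2) (2 * T (2*m+1) c) with h | h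
      · exact Or.inl ⟨h1, h⟩
      · exact Or.inr ⟨h1, by omega⟩
    · rintro (⟨h1, h2⟩ | ⟨h1, h2⟩) <;> exact ⟨h1, by omega⟩
  have hdisj : Disjoint
      (Finset.univ.filter (fun c : Fin d → Bool => c j = true ∧ d + 2 < 2 * T d c))
      (Finset.univ.filter (fun c : Fin d → Bool => c j = true ∧ T d c = m + 1)) := by
    rw [Finset.disjoint_left]
    intro c h1 h2
    simp only [Finset.mem_filter, Finset.mem_univ, true_and] at h1 h2
    omega
  rw [e3, Finset.card_union_of_disjoint hdisj, card_exact d j m hd]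
  ring

theorem stmt4 (d : ℕ) (hd : 1 ≤ d) (hodd : Odd d) (x : Fin d → ℝ)
    (hx : ∀ j, x j = 1 ∨ x j = -1) :
    ∑ b ∈ Finset.univ.filter (fun b : Fin d → Bool =>
        0 < ∑ j, signVec d b j * x j), signVec d b
      = ((d - 1).choose ((d - 1) / 2) : ℝ) • x := by
  obtain ⟨m, hm⟩ := hodd
  have hm' : d = 2 * m + 1 := by omega
  set s : Fin d → Bool := fun j => if x j = 1 then true else false with hs
  set φ : (Fin d → Bool) → (Fin d → Bool) := fun b j => b j == s j with hφ
  have hx2 : ∀ j, x j * x j = 1 := by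
    intro j; rcases hx j with h | h <;> rw [h] <;> norm_num
  have key : ∀ (b : Fin d → Bool) (j : Fin d), signVec d (φ b) j = signVec d b j * x j := by
    intro b j
    have h1 : ((-1:ℝ) = 1) = False := by norm_num
    rcases hx j with h | h <;> cases hb : b j <;>
      simp [signVec, hφ, hs, h, hb, h1]
  have hinv : ∀ b : Fin d → Bool, φ (φ b) = b := by
    intro b; funext j
    cases hb : b j <;> cases hsj : s j <;> simp [hφ, hb, hsj]
  have step1 : ∑ b ∈ Finset.univ.filter (fun b : Fin d → Bool =>
        0 < ∑ j, signVec d b j * x j), signVec d b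
      = ∑ c ∈ Finset.univ.filter (fun c : Fin d → Bool =>
        0 < ∑ j, signVec d c j), (fun j => signVec d c j * x j) := by
    apply Finset.sum_nbij' (i := φ) (j := φ)
    · intro b hb
      simp only [Finset.mem_filter, Finset.mem_univ, true_and] at hb ⊢
      calc (0:ℝ) < ∑ j, signVec d b j * x j := hb
        _ = ∑ j, signVec d (φ b) j := by
            apply Finset.sum_congr rfl; intro j _; rw [key]
    · intro c hc
      simp only [Finset.mem_filter, Finset.mem_univ, true_and] at hc ⊢
      calc (0:ℝ) < ∑ j, signVec d c j := hc
        _ = ∑ j, signVec d (φ c) j * x j := by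
            apply Finset.sum_congr rfl; intro j _
            rw [key, mul_assoc, hx2, mul_one]
    · intro b _; exact hinv b
    · intro c _; exact hinv c
    · intro b _
      funext j
      rw [key, mul_assoc, hx2, mul_one]
  rw [step1]
  funext j
  rw [Finset.sum_apply, Pi.smul_apply]
  rw [← Finset.sum_mul, component d m hm' j]
  rw [show d - 1 = 2 * m by omega, show (2 * m) / 2 = m by omega]
  simp [mul_comm]
end

section
/- Let d ≥ 2 be even and let x ∈ {−1,1}^d. Then the sum of z over all z ∈ {−1,1}^d with ⟨z, x⟩ > 0 equals binom(d−1, d/2) · x. -/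
namespace Stmt5Aux
variable {d : ℕ}

def K (c : Fin d → Bool) : ℕ := (Finset.univ.filter fun i => c i = true).card

lemma sum_signVec (c : Fin d → Bool) :
    ∑ j, signVec d c j = 2 * (K c : ℝ) - d := by
  have h : ∀ j, signVec d c j = 2 * (if c j = true then (1:ℝ) else 0) - 1 := by
    intro j; by_cases h : c j <;> simp [signVec, h] <;> norm_num
  simp_rw [h, Finset.sum_sub_distrib, ← Finset.mul_sum, Finset.sum_boole]
  simp [K]

lemma Q_iff (heven : Even d) (c : Fin d → Bool) :
    (0 < ∑ i, signVec d c i) ↔ d / 2 < K c := by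
  obtain ⟨m, rfl⟩ := heven
  rw [sum_signVec]
  have h2 : ((m + m : ℕ) : ℝ) = 2 * m := by push_cast; ring
  constructor
  · intro h
    have : ((m + m : ℕ) : ℝ) < 2 * K c := by linarith
    rw [h2] at this
    have : (m : ℝ) < K c := by linarith
    have := Nat.cast_lt.mp this
    omega
  · intro h
    have hm : m < K c := by omega
    have : (m : ℝ) < K c := by exact_mod_cast hm
    rw [h2]; push_cast; linarith

end Stmt5Aux
namespace Stmt5Aux
variable {d : ℕ}

lemma K_update_false (c : Fin d → Bool) (j : Fin d) (h : c j = true) :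
    K (Function.update c j false) + 1 = K c := by
  have hfil : (Finset.univ.filter fun i => Function.update c j false i = true)
      = (Finset.univ.filter fun i => c i = true).erase j := by
    ext i
    by_cases hij : i = j <;> simp [Function.update, hij, h]
  rw [K, hfil, Finset.card_erase_of_mem (by simp [h])]
  have : 0 < K c := Finset.card_pos.mpr ⟨j, by simp [h]⟩
  unfold K at *
  omega

lemma K_update_true (c : Fin d → Bool) (j : Fin d) (h : c j = false) :
    K (Function.update c j true) = K c + 1 := by
  have hfil : (Finset.univ.filter fun i => Function.update c j true i = true)
      = insert j (Finset.univ.filter fun i => c i = true) := by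
    ext i
    by_cases hij : i = j <;> simp [Function.update, hij, h]
  rw [K, hfil, Finset.card_insert_of_notMem (by simp [h])]
  rfl

lemma card_B (j : Fin d) (m : ℕ) :
    (Finset.univ.filter fun c : Fin d → Bool => c j = true ∧ K c = m + 1).card
      = (d - 1).choose m := by
  have hcard : ((Finset.univ : Finset (Fin d)).erase j).card = d - 1 := by
    rw [Finset.card_erase_of_mem (Finset.mem_univ j)]; simp
  rw [← hcard, ← Finset.card_powersetCard]
  apply Finset.card_bij' (i := fun c _ => (Finset.univ.filter fun i => c i = true).erase j)
    (j := fun s _ => fun i => decide (i ∈ insert j s))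
  · intro c hc
    simp only [Finset.mem_filter, Finset.mem_univ, true_and] at hc
    rw [Finset.mem_powersetCard]
    constructor
    · intro i hi
      simp only [Finset.mem_erase, Finset.mem_filter] at hi ⊢
      exact ⟨hi.1, Finset.mem_univ i⟩
    · rw [Finset.card_erase_of_mem (by simp [hc.1])]
      have : K c = m + 1 := hc.2
      unfold K at this; omega
  · intro s hs
    rw [Finset.mem_powersetCard] at hs
    have hjs : j ∉ s := fun h => by simpa using (hs.1 h)
    simp only [Finset.mem_filter, Finset.mem_univ, true_and]
    constructor
    · simp
    · unfold K
      have : (Finset.univ.filter fun i => decide (i ∈ insert j s) = true) = insert j s := by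
        ext i; simp
      rw [this, Finset.card_insert_of_notMem hjs, hs.2]
  · intro c hc
    simp only [Finset.mem_filter, Finset.mem_univ, true_and] at hc
    funext i
    by_cases hij : i = j
    · subst hij; simp [hc.1]
    · simp only [decide_eq_true_eq, Finset.mem_insert, hij, false_or, Finset.mem_erase,
        Finset.mem_filter]
      by_cases h : c i = true <;> simp [h, hij]
  · intro s hs
    rw [Finset.mem_powersetCard] at hs
    have hjs : j ∉ s := fun h => by simpa using (hs.1 h)
    have : (Finset.univ.filter fun i => decide (i ∈ insert j s) = true) = insert j s := by
      ext i; simp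
    rw [this, Finset.erase_insert hjs]

end Stmt5Aux
namespace Stmt5Aux
variable {d : ℕ}

lemma S_eq (heven : Even d) (j : Fin d) :
    ∑ c ∈ Finset.univ.filter (fun c : Fin d → Bool => 0 < ∑ i, signVec d c i),
      signVec d c j = ((d - 1).choose (d / 2) : ℝ) := by
  classical
  set g : (Fin d → Bool) → (Fin d → Bool) := fun c => Function.update c j (!(c j)) with hg
  have hgg : ∀ c, g (g c) = c := by
    intro c
    simp only [hg, Function.update_self, Bool.not_not, Function.update_idem,
      Function.update_eq_self]
  have hgj : ∀ c, (g c) j = !(c j) := by intro c; simp [hg]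
  have hKg : ∀ c : Fin d → Bool, (c j = true ∧ K (g c) + 1 = K c) ∨
      (c j = false ∧ K (g c) = K c + 1) := by
    intro c
    by_cases h : c j = true
    · left; refine ⟨h, ?_⟩
      have := K_update_false c j h
      simpa [hg, h] using this
    · right
      have h' : c j = false := by simpa using h
      refine ⟨h', ?_⟩
      have := K_update_true c j h'
      simpa [hg, h'] using this
  rw [show (Finset.univ.filter (fun c : Fin d → Bool => 0 < ∑ i, signVec d c i))
      = Finset.univ.filter (fun c : Fin d → Bool => d / 2 < K c) from
    Finset.filter_congr fun c _ => by simp [Q_iff heven]]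
  set s := Finset.univ.filter (fun c : Fin d → Bool => d / 2 < K c) with hs
  rw [← Finset.sum_filter_add_sum_filter_not s (fun c => d / 2 < K (g c))]
  have h1 : ∑ c ∈ s.filter (fun c => d / 2 < K (g c)), signVec d c j = 0 := by
    apply Finset.sum_involution (g := fun c _ => g c)
    · intro c hc
      rcases Bool.eq_false_or_eq_true (c j) with h | h <;>
        simp [signVec, hgj, h]
    · intro c hc hne
      intro heq
      have := congrFun heq j
      rw [hgj] at this
      exact Bool.not_ne_self _ this
    · intro c hc
      simp only [Finset.mem_filter, hs, Finset.mem_univ, true_and] at hc ⊢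
      rw [hgg]
      exact ⟨hc.2, hc.1⟩
    · intro c _; exact hgg c
  rw [h1, zero_add]
  have h2 : s.filter (fun c => ¬ d / 2 < K (g c))
      = Finset.univ.filter fun c : Fin d → Bool => c j = true ∧ K c = d / 2 + 1 := by
    ext c
    simp only [Finset.mem_filter, hs, Finset.mem_univ, true_and]
    rcases hKg c with ⟨h, hK⟩ | ⟨h, hK⟩
    · constructor
      · rintro ⟨h1, h2⟩; exact ⟨h, by omega⟩
      · rintro ⟨-, h1⟩; exact ⟨by omega, by omega⟩
    · constructor
      · rintro ⟨h1, h2⟩; omega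
      · rintro ⟨h1, -⟩; rw [h] at h1; exact absurd h1 (by simp)
  rw [h2]
  rw [Finset.sum_congr rfl (fun c hc => by
    simp only [Finset.mem_filter] at hc
    show signVec d c j = 1
    simp [signVec, hc.2.1])]
  simp [card_B j (d / 2)]

end Stmt5Aux

theorem stmt5 (d : ℕ) (hd : 2 ≤ d) (heven : Even d) (x : Fin d → ℝ)
    (hx : ∀ j, x j = 1 ∨ x j = -1) :
    ∑ b ∈ Finset.univ.filter (fun b : Fin d → Bool =>
        0 < ∑ j, signVec d b j * x j), signVec d b
      = ((d - 1).choose (d / 2) : ℝ) • x := by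
  classical
  funext j
  rw [Finset.sum_apply]
  set φ : (Fin d → Bool) → (Fin d → Bool) := fun c i => if x i = 1 then c i else !(c i) with hφ
  have hsign : ∀ (c : Fin d → Bool) (i : Fin d),
      signVec d (φ c) i = signVec d c i * x i := by
    intro c i
    rcases hx i with h | h <;> by_cases hc : c i <;>
      simp [signVec, hφ, h, hc] <;> norm_num
  have hφφ : ∀ c, φ (φ c) = c := by
    intro c; funext i; by_cases h : x i = 1 <;> simp [hφ, h]
  have hxx : ∀ i, x i * x i = 1 := by
    intro i; rcases hx i with h | h <;> rw [h] <;> norm_num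
  have hkey : ∑ b ∈ Finset.univ.filter (fun b : Fin d → Bool =>
        0 < ∑ i, signVec d b i * x i), signVec d b j
      = ∑ c ∈ Finset.univ.filter (fun c : Fin d → Bool =>
        0 < ∑ i, signVec d c i), signVec d c j * x j := by
    apply Finset.sum_nbij' (i := φ) (j := φ)
    · intro b hb
      simp only [Finset.mem_filter, Finset.mem_univ, true_and] at hb ⊢
      calc (0:ℝ) < ∑ i, signVec d b i * x i := hb
        _ = ∑ i, signVec d (φ b) i := by simp_rw [hsign]
    · intro c hc
      simp only [Finset.mem_filter, Finset.mem_univ, true_and] at hc ⊢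
      calc (0:ℝ) < ∑ i, signVec d c i := hc
        _ = ∑ i, signVec d (φ c) i * x i := by
            simp_rw [hsign, mul_assoc, hxx, mul_one]
    · intro b _; exact hφφ b
    · intro c _; exact hφφ c
    · intro b _
      rw [hsign, mul_assoc, hxx, mul_one]
  rw [hkey, ← Finset.sum_mul, Stmt5Aux.S_eq heven j]
  simp [mul_comm]
end

section
/- Fix reals r > 0 and δ ∈ (0, 1). For s ∈ {−1, 1}, define g_s : ℝ → ℝ by g_s(θ) = ((1 + δ·s)/2)·max(r − θ, 0) + ((1 − δ·s)/2)·max(r + θ, 0). Then (i) the infimum of g_s over [−r, r] equals r(1 − δ), attained at θ = r·s; and (ii) the infimum of g₁ + g₋₁ over [−r, r] minus the two individual minima equals 2·r·δ. -/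
/-!
On `[-r, r]` both hinge terms are active, so `g_s(θ) = r - δ s θ` is affine; for `s = ±1` it is
minimised at the endpoint `θ = r s`, and the linear parts of `g₁` and `g₋₁` cancel, so their sum is
the constant `2r`.
-/

/-- Expected hinge loss under the two-point sampling distribution:
`g_s(θ) = ((1+δs)/2)·max(r−θ,0) + ((1−δs)/2)·max(r+θ,0)`. -/
noncomputable def gfun (r δ s θ : ℝ) : ℝ :=
  ((1 + δ * s) / 2) * max (r - θ) 0 + ((1 - δ * s) / 2) * max (r + θ) 0

open Set

section

variable {r δ s θ : ℝ}

lemma gfun_eq_of_mem_Icc (δ s : ℝ) (hθ : θ ∈ Icc (-r) r) : gfun r δ s θ = r - δ * s * θ := by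
  obtain ⟨hθl, hθr⟩ := hθ
  rw [gfun, max_eq_left (by linarith), max_eq_left (by linarith)]
  ring

lemma gfun_add_gfun_neg_of_mem_Icc (δ s : ℝ) (hθ : θ ∈ Icc (-r) r) :
    gfun r δ s θ + gfun r δ (-s) θ = 2 * r := by
  rw [gfun_eq_of_mem_Icc δ s hθ, gfun_eq_of_mem_Icc δ (-s) hθ]
  ring

lemma mul_mem_Icc_of_abs_eq_one (hr : 0 ≤ r) (hs : |s| = 1) : r * s ∈ Icc (-r) r :=
  abs_le.1 (by rw [abs_mul, abs_of_nonneg hr, hs, mul_one])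

lemma gfun_mul_self_of_abs_eq_one (hr : 0 ≤ r) (δ : ℝ) (hs : |s| = 1) :
    gfun r δ s (r * s) = r * (1 - δ) := by
  have hss : s * s = 1 := by rw [← abs_mul_abs_self, hs, mul_one]
  rw [gfun_eq_of_mem_Icc δ s (mul_mem_Icc_of_abs_eq_one hr hs)]
  linear_combination (-(δ * r)) * hss

lemma isLeast_gfun_image_Icc (hr : 0 ≤ r) (hδ : 0 ≤ δ) (hs : |s| = 1) :
    IsLeast (gfun r δ s '' Icc (-r) r) (r * (1 - δ)) := by
  refine ⟨⟨r * s, mul_mem_Icc_of_abs_eq_one hr hs, gfun_mul_self_of_abs_eq_one hr δ hs⟩, ?_⟩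
  rintro _ ⟨θ, hθ, rfl⟩
  have hsθ : s * θ ≤ r :=
    calc s * θ ≤ |s * θ| := le_abs_self _
      _ = |θ| := by rw [abs_mul, hs, one_mul]
      _ ≤ r := abs_le.2 hθ
  rw [gfun_eq_of_mem_Icc δ s hθ]
  linarith [mul_le_mul_of_nonneg_left hsθ hδ]

end

theorem stmt11 (r δ : ℝ) (hr : 0 < r) (hδ : δ ∈ Set.Ioo (0 : ℝ) 1) :
    (∀ s : ℝ, s = 1 ∨ s = -1 →
      IsLeast (gfun r δ s '' Set.Icc (-r) r) (r * (1 - δ)) ∧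
        gfun r δ s (r * s) = r * (1 - δ)) ∧
    sInf ((fun θ => gfun r δ 1 θ + gfun r δ (-1) θ) '' Set.Icc (-r) r)
        - (r * (1 - δ) + r * (1 - δ)) = 2 * r * δ := by
  refine ⟨fun s hs => ?_, ?_⟩
  · have hs' : |s| = 1 := (abs_eq zero_le_one).2 hs
    exact ⟨isLeast_gfun_image_Icc hr.le hδ.1.le hs', gfun_mul_self_of_abs_eq_one hr.le δ hs'⟩
  · have hsum : (fun θ => gfun r δ 1 θ + gfun r δ (-1) θ) '' Icc (-r) r = {2 * r} := by
      rw [← (nonempty_Icc.2 (neg_le_self hr.le)).image_const (2 * r)]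
      exact EqOn.image_eq fun θ hθ => gfun_add_gfun_neg_of_mem_Icc δ 1 hθ
    rw [hsum, csInf_singleton]
    ring
end
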